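/- arXiv:2405.00497 — 3 statements merged into one kernel-verified Lean document; each statement's English description precedes it below -/
import Mathlib

section
/- If x, u ∈ ℝⁿ satisfy |x−u|_Q ≤ 1/(2(1+|x|_Q)), and x ∈ R_j, then x and u both lie in R_{j−1} ∪ R_j or both lie in R_j ∪ R_{j+1}. -/
open Set

variable {E : Type*} [NormedAddCommGroup E] [InnerProductSpace ℝ E]

/-- `R(x) = |x|_Q² / 2`, where `‖·‖` is the Euclidean norm `|·|_Q` associated with `Q∞`. -/
noncomputable def Rform (x : E) : ℝ := ‖x‖ ^ 2 / 2

/-- The ring `R_ν = {x : ν ≤ R(x) ≤ ν + 1}`, empty for `ν < 0`. -/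
noncomputable def ringSet (ν : ℤ) : Set E :=
  {x : E | 0 ≤ ν ∧ (ν : ℝ) ≤ Rform x ∧ Rform x ≤ (ν : ℝ) + 1}

theorem close_points_in_adjacent_rings (x u : E) (j : ℕ)
    (hclose : ‖x - u‖ ≤ 1 / (2 * (1 + ‖x‖)))
    (hx : x ∈ ringSet (j : ℤ)) :
    (x ∈ ringSet ((j : ℤ) - 1) ∪ ringSet (j : ℤ) ∧
        u ∈ ringSet ((j : ℤ) - 1) ∪ ringSet (j : ℤ)) ∨
      (x ∈ ringSet (j : ℤ) ∪ ringSet ((j : ℤ) + 1) ∧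
        u ∈ ringSet (j : ℤ) ∪ ringSet ((j : ℤ) + 1)) := by
  obtain ⟨hj0, hx1, hx2⟩ := hx
  push_cast at hx1 hx2
  set a := ‖x‖ with ha
  set b := ‖u‖ with hb
  set d := ‖x - u‖ with hd
  have hn : (0:ℝ) ≤ a := norm_nonneg x
  have hbn : (0:ℝ) ≤ b := norm_nonneg u
  have hd0 : (0:ℝ) ≤ d := norm_nonneg _
  have hpos : (0:ℝ) < 2 * (1 + a) := by positivity
  have hxu : |b - a| ≤ d := by
    rw [abs_sub_comm]
    simpa [ha, hb, hd, norm_sub_rev x u] using abs_norm_sub_norm_le x u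
  have hb1 : b ≤ a + d := by have := abs_le.mp hxu; linarith [this.2]
  have hb2 : a - d ≤ b := by have := abs_le.mp hxu; linarith [this.1]
  have hdm : d * (2 * (1 + a)) ≤ 1 := by
    calc d * (2 * (1 + a)) ≤ (1 / (2 * (1 + a))) * (2 * (1 + a)) :=
          mul_le_mul_of_nonneg_right hclose hpos.le
      _ = 1 := by field_simp
  have hd2 : d ≤ 1/2 := by nlinarith
  have hRx : Rform x = a ^ 2 / 2 := rfl
  have hRu : Rform u = b ^ 2 / 2 := rfl
  have key1 : Rform u - Rform x ≤ 1/2 := by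
    rw [hRx, hRu]; nlinarith [sq_nonneg d, mul_nonneg hd0 hn]
  have key2 : Rform x - Rform u ≤ 1/2 := by
    rw [hRx, hRu]; nlinarith [sq_nonneg d, mul_nonneg hd0 hn, mul_nonneg hd0 hbn]
  have hRu0 : (0:ℝ) ≤ Rform u := by rw [hRu]; positivity
  by_cases hcase : 1 ≤ j ∧ Rform x ≤ (j:ℝ) + 1/2
  · obtain ⟨hj1, hxh⟩ := hcase
    have hj1' : (1:ℝ) ≤ (j:ℝ) := by exact_mod_cast hj1
    left
    constructor
    · right; refine ⟨hj0, ?_, ?_⟩ <;> push_cast <;> linarith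
    · by_cases hu : Rform u ≤ (j:ℝ)
      · left
        refine ⟨by omega, ?_, ?_⟩ <;> push_cast <;> linarith
      · right
        refine ⟨hj0, ?_, ?_⟩ <;> push_cast <;> linarith [le_of_not_ge hu]
  · right
    have hcase' : j = 0 ∨ (j:ℝ) + 1/2 < Rform x := by
      rcases not_and_or.mp hcase with h | h
      · left; omega
      · right; linarith [lt_of_not_ge h]
    constructor
    · left; refine ⟨hj0, ?_, ?_⟩ <;> push_cast <;> linarith
    · by_cases hu : Rform u ≤ (j:ℝ) + 1
      · left
        refine ⟨hj0, ?_, ?_⟩ <;> push_cast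
        · rcases hcase' with h | h
          · rw [h]; simpa using hRu0
          · linarith
        · linarith
      · right
        refine ⟨by omega, ?_, ?_⟩ <;> push_cast <;> linarith [lt_of_not_ge hu]
end

section
/- Gaussian-in-time integral estimate: let p, r ≥ 0 with p + r/2 > 1, and let δ > 0. Suppose x, u ∈ ℝⁿ satisfy x ≠ u, and assume the lower bound |D_t x − u|²/t ≥ c|x−u|²/t + c t |x|² − C holds for all 0 < t < 1 (with constants c, C > 0). Then ∫₀¹ t^{−p} exp(−δ |u − D_t x|²/t) |x|^r dt ≤ C' |u−x|^{−2p−r+2}, with C' depending only on δ, p, r, c, C and the dimension. -/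
open MeasureTheory Set Real


lemma aux_rpow_mul_exp_le {z s : ℝ} (hz : 0 ≤ z) (hs : 0 ≤ s) :
    z ^ s * Real.exp (-z) ≤ s ^ s * Real.exp (-s) := by
  rcases eq_or_lt_of_le hs with rfl | hs
  · simp only [Real.rpow_zero, one_mul, neg_zero, Real.exp_zero]
    exact Real.exp_le_one_iff.mpr (by linarith)
  rcases eq_or_lt_of_le hz with rfl | hz
  · rw [Real.zero_rpow hs.ne', zero_mul]
    positivity
  rw [← Real.log_le_log_iff (by positivity) (by positivity), Real.log_mul (by positivity)
    (Real.exp_pos _).ne', Real.log_mul (by positivity) (Real.exp_pos _).ne',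
    Real.log_rpow hz, Real.log_rpow hs, Real.log_exp, Real.log_exp]
  have h := Real.log_le_sub_one_of_pos (show 0 < z / s by positivity)
  rw [Real.log_div hz.ne' hs.ne'] at h
  have h2 := mul_le_mul_of_nonneg_left h hs.le
  have h3 : s * (z / s - 1) = z - s := by field_simp
  nlinarith

lemma aux_pos_rpow_self {w : ℝ} (hw : 0 ≤ w) : 0 < w ^ w := by
  rcases eq_or_lt_of_le hw with rfl | hw
  · simp
  · positivity

lemma aux_integral_Ioi (q a : ℝ) (hq : 1 < q) (ha : 0 < a) :
    ∫ t in Ioi (0:ℝ), t ^ (-q) * Real.exp (-(a * t⁻¹))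
      = (1/a) ^ (q-1) * Real.Gamma (q-1) := by
  have h := integral_comp_rpow_Ioi (fun s => s ^ (q-1-1) * Real.exp (-(a*s)))
      (p := -1) (by norm_num)
  rw [← Real.integral_rpow_mul_exp_neg_mul_Ioi (by linarith : (0:ℝ) < q-1) ha, ← h]
  refine setIntegral_congr_fun measurableSet_Ioi fun t ht => ?_
  have ht' : (0:ℝ) < t := ht
  rw [smul_eq_mul, Real.rpow_neg_one]
  rw [Real.inv_rpow ht'.le, ← Real.rpow_neg ht'.le, abs_neg, abs_one, one_mul,
      show (-q) = (-1 - 1) + -(q - 1 - 1) by ring, Real.rpow_add ht']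
  ring

lemma aux_ptwise_bound {q a t : ℝ} (hq : 0 ≤ q) (ha : 0 < a) (ht : 0 < t) :
    t ^ (-q) * Real.exp (-(a * t⁻¹)) ≤ q ^ q * Real.exp (-q) * a ^ (-q) := by
  have h := aux_rpow_mul_exp_le (z := a * t⁻¹) (by positivity) hq
  have hz : (a * t⁻¹) ^ q = a ^ q * t ^ (-q) := by
    rw [Real.mul_rpow ha.le (by positivity), Real.inv_rpow ht.le, ← Real.rpow_neg ht.le]
  rw [hz] at h
  have key : a ^ q * a ^ (-q) = 1 := by
    rw [← Real.rpow_add ha]; norm_num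
  have h4 := mul_le_mul_of_nonneg_right h (Real.rpow_pos_of_pos ha (-q)).le
  have h5 : a ^ q * t ^ (-q) * Real.exp (-(a * t⁻¹)) * a ^ (-q)
      = t ^ (-q) * Real.exp (-(a * t⁻¹)) := by
    rw [show a ^ q * t ^ (-q) * Real.exp (-(a * t⁻¹)) * a ^ (-q)
        = a ^ q * a ^ (-q) * (t ^ (-q) * Real.exp (-(a * t⁻¹))) from by ring, key, one_mul]
  linarith

lemma aux_integrable (q a : ℝ) (hq : 1 < q) (ha : 0 < a) :
    IntegrableOn (fun t => t ^ (-q) * Real.exp (-(a * t⁻¹))) (Ioi (0:ℝ)) := by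
  have hm : ContinuousOn (fun t : ℝ => t ^ (-q) * Real.exp (-(a * t⁻¹))) (Ioi 0) := by
    apply ContinuousOn.mul
    · exact fun t ht =>
        (Real.continuousAt_rpow_const t (-q) (Or.inl (ne_of_gt ht))).continuousWithinAt
    · exact Real.continuous_exp.comp_continuousOn
        (((continuousOn_const.mul (continuousOn_id.inv₀ fun t ht => ne_of_gt ht))).neg)
  rw [← Ioc_union_Ioi_eq_Ioi (zero_le_one (α := ℝ))]
  apply IntegrableOn.union
  · refine Integrable.mono' (g := fun _ => q ^ q * Real.exp (-q) * a ^ (-q))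
      (integrableOn_const measure_Ioc_lt_top.ne) ((hm.mono Ioc_subset_Ioi_self).aestronglyMeasurable measurableSet_Ioc) ?_
    refine (ae_restrict_iff' measurableSet_Ioc).mpr (ae_of_all _ fun t ht => ?_)
    have ht0 : 0 < t := ht.1
    rw [Real.norm_eq_abs, abs_of_nonneg (by positivity)]
    exact aux_ptwise_bound (by linarith) ha ht0
  · refine Integrable.mono' (g := fun t => t ^ (-q))
      (integrableOn_Ioi_rpow_of_lt (by linarith) one_pos) ((hm.mono fun t (ht : t ∈ Ioi 1) => lt_trans one_pos ht).aestronglyMeasurable measurableSet_Ioi) ?_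
    refine (ae_restrict_iff' measurableSet_Ioi).mpr (ae_of_all _ fun t ht => ?_)
    have ht0 : (0:ℝ) < t := lt_trans one_pos ht
    rw [Real.norm_eq_abs, abs_of_nonneg (by positivity)]
    exact mul_le_of_le_one_right (by positivity)
      (Real.exp_le_one_iff.mpr (by simp; positivity))


theorem gaussian_time_integral_estimate
    (n : ℕ) (p r δ c C : ℝ) (hp : 0 ≤ p) (hr : 0 ≤ r) (hpr : 1 < p + r / 2)
    (hδ : 0 < δ) (hc : 0 < c) (hC : 0 < C) :
    ∃ C' : ℝ, 0 < C' ∧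
      ∀ (D : ℝ → EuclideanSpace ℝ (Fin n) → EuclideanSpace ℝ (Fin n))
        (x u : EuclideanSpace ℝ (Fin n)), x ≠ u →
        (∀ t : ℝ, 0 < t → t < 1 →
          c * ‖x - u‖ ^ 2 / t + c * t * ‖x‖ ^ 2 - C ≤ ‖D t x - u‖ ^ 2 / t) →
        ∫ t in Ioc (0 : ℝ) 1,
            t ^ (-p) * Real.exp (-δ * ‖u - D t x‖ ^ 2 / t) * ‖x‖ ^ r ≤
          C' * ‖u - x‖ ^ (-2 * p - r + 2) := by
  have hδc : 0 < δ * c := by positivity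
  have hK1 : 0 < (r/2) ^ (r/2) * Real.exp (-(r/2)) * (δ*c) ^ (-(r/2)) :=
    mul_pos (mul_pos (aux_pos_rpow_self (by linarith)) (Real.exp_pos _))
      (Real.rpow_pos_of_pos hδc _)
  have hΓ : 0 < Real.Gamma (p + r/2 - 1) := Real.Gamma_pos_of_pos (by linarith)
  refine ⟨Real.exp (δ*C) * ((r/2) ^ (r/2) * Real.exp (-(r/2)) * (δ*c) ^ (-(r/2))) *
      ((δ*c) ^ (1 - (p + r/2)) * Real.Gamma (p + r/2 - 1)),
    mul_pos (mul_pos (Real.exp_pos _) hK1)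
      (mul_pos (Real.rpow_pos_of_pos hδc _) hΓ), ?_⟩
  intro D x u hxu hb
  have hxu' : 0 < ‖x - u‖ := norm_sub_pos_iff.mpr hxu
  set q := p + r / 2 with hq_def
  set a := δ * c * ‖x - u‖ ^ 2 with ha_def
  have ha : 0 < a := by positivity
  set K := Real.exp (δ*C) * ((r/2) ^ (r/2) * Real.exp (-(r/2)) * (δ*c) ^ (-(r/2)))
    with hK_def
  have hK : 0 < K := mul_pos (Real.exp_pos _) hK1
  have hIntIoi := aux_integrable q a hpr ha
  -- pointwise bound
  have h1 : ∀ᵐ (t:ℝ) ∂(volume : Measure ℝ), t ≠ (1:ℝ) := by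
    have hs : {t : ℝ | ¬ t ≠ 1} = {1} := by ext t; simp
    rw [ae_iff, hs]; exact measure_singleton 1
  have key : ∀ᵐ t ∂(volume.restrict (Ioc (0:ℝ) 1)),
      t ^ (-p) * Real.exp (-δ * ‖u - D t x‖ ^ 2 / t) * ‖x‖ ^ r ≤
        K * (t ^ (-q) * Real.exp (-(a * t⁻¹))) := by
    rw [ae_restrict_iff' measurableSet_Ioc]
    filter_upwards [h1] with t ht1 ht
    have ht0 : 0 < t := ht.1
    have htl : t < 1 := lt_of_le_of_ne ht.2 ht1
    have hbt := hb t ht0 htl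
    have e1 : Real.exp (-δ * ‖u - D t x‖ ^ 2 / t) ≤
        Real.exp (δ*C) * (Real.exp (-(a * t⁻¹)) * Real.exp (-(δ*c*t*‖x‖^2))) := by
      rw [← Real.exp_add, ← Real.exp_add, Real.exp_le_exp, norm_sub_rev, ha_def]
      have hmul := mul_le_mul_of_nonneg_left hbt hδ.le
      ring_nf at hmul ⊢
      linarith
    have e2 : ‖x‖ ^ r * Real.exp (-(δ*c*t*‖x‖^2)) ≤
        (r/2) ^ (r/2) * Real.exp (-(r/2)) * (δ*c) ^ (-(r/2)) * t ^ (-(r/2)) := by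
      have hb2 : 0 < δ*c*t := by positivity
      have h := aux_rpow_mul_exp_le (z := δ*c*t*‖x‖^2) (by positivity)
        (show (0:ℝ) ≤ r/2 by linarith)
      have hz : (δ*c*t*‖x‖^2) ^ (r/2) = (δ*c*t) ^ (r/2) * ‖x‖ ^ r := by
        rw [Real.mul_rpow (by positivity) (by positivity), ← Real.rpow_natCast ‖x‖ 2,
          ← Real.rpow_mul (norm_nonneg x)]
        rw [show ((2:ℕ):ℝ) * (r/2) = r from by push_cast; ring]
      rw [hz] at h
      have hpow : 0 < (δ*c*t) ^ (-(r/2)) := Real.rpow_pos_of_pos hb2 _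
      have hinv : (δ*c*t) ^ (r/2) * (δ*c*t) ^ (-(r/2)) = 1 := by
        rw [← Real.rpow_add hb2]; norm_num
      have h4 := mul_le_mul_of_nonneg_right h hpow.le
      have hsplit : (δ*c*t) ^ (-(r/2)) = (δ*c) ^ (-(r/2)) * t ^ (-(r/2)) :=
        Real.mul_rpow hδc.le ht0.le
      calc ‖x‖ ^ r * Real.exp (-(δ*c*t*‖x‖^2))
          = (δ*c*t) ^ (r/2) * ‖x‖ ^ r * Real.exp (-(δ*c*t*‖x‖^2)) * (δ*c*t) ^ (-(r/2)) := by
            rw [show (δ*c*t) ^ (r/2) * ‖x‖ ^ r * Real.exp (-(δ*c*t*‖x‖^2)) * (δ*c*t) ^ (-(r/2))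
              = (δ*c*t) ^ (r/2) * (δ*c*t) ^ (-(r/2)) * (‖x‖ ^ r * Real.exp (-(δ*c*t*‖x‖^2)))
              from by ring, hinv, one_mul]
        _ ≤ (r/2) ^ (r/2) * Real.exp (-(r/2)) * (δ*c*t) ^ (-(r/2)) := h4
        _ = (r/2) ^ (r/2) * Real.exp (-(r/2)) * (δ*c) ^ (-(r/2)) * t ^ (-(r/2)) := by
            rw [hsplit]; ring
    have ht_p : 0 < t ^ (-p) := Real.rpow_pos_of_pos ht0 _
    have hxr : 0 ≤ ‖x‖ ^ r := Real.rpow_nonneg (norm_nonneg x) r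
    calc t ^ (-p) * Real.exp (-δ * ‖u - D t x‖ ^ 2 / t) * ‖x‖ ^ r
        ≤ t ^ (-p) * (Real.exp (δ*C) * (Real.exp (-(a * t⁻¹)) * Real.exp (-(δ*c*t*‖x‖^2))))
            * ‖x‖ ^ r :=
          mul_le_mul_of_nonneg_right (mul_le_mul_of_nonneg_left e1 ht_p.le) hxr
      _ = (Real.exp (δ*C) * Real.exp (-(a * t⁻¹)) * t ^ (-p)) *
            (‖x‖ ^ r * Real.exp (-(δ*c*t*‖x‖^2))) := by ring
      _ ≤ (Real.exp (δ*C) * Real.exp (-(a * t⁻¹)) * t ^ (-p)) *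
            ((r/2) ^ (r/2) * Real.exp (-(r/2)) * (δ*c) ^ (-(r/2)) * t ^ (-(r/2))) :=
          mul_le_mul_of_nonneg_left e2 (by positivity)
      _ = K * (t ^ (-p) * t ^ (-(r/2)) * Real.exp (-(a * t⁻¹))) := by
          rw [hK_def]; ring
      _ = K * (t ^ (-q) * Real.exp (-(a * t⁻¹))) := by
          rw [← Real.rpow_add ht0, hq_def, show -p + -(r/2) = -(p + r/2) from by ring]
  have hnonneg : 0 ≤ᵐ[volume.restrict (Ioc (0:ℝ) 1)]
      fun t => t ^ (-p) * Real.exp (-δ * ‖u - D t x‖ ^ 2 / t) * ‖x‖ ^ r := by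
    refine (ae_restrict_iff' measurableSet_Ioc).mpr (ae_of_all _ fun t ht => ?_)
    have ht0 : 0 < t := ht.1
    exact mul_nonneg (mul_nonneg (Real.rpow_pos_of_pos ht0 _).le (Real.exp_pos _).le)
      (Real.rpow_nonneg (norm_nonneg x) r)
  have hIntIoc : Integrable (fun t => K * (t ^ (-q) * Real.exp (-(a * t⁻¹))))
      (volume.restrict (Ioc (0:ℝ) 1)) :=
    (hIntIoi.mono_set Ioc_subset_Ioi_self).const_mul K
  have hnonneg' : 0 ≤ᵐ[volume.restrict (Ioi (0:ℝ))]
      fun t => t ^ (-q) * Real.exp (-(a * t⁻¹)) := by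
    exact (ae_restrict_iff' measurableSet_Ioi).mpr <| ae_of_all _ fun t ht =>
      mul_nonneg (Real.rpow_nonneg (le_of_lt ht) _) (Real.exp_pos _).le
  calc ∫ t in Ioc (0:ℝ) 1, t ^ (-p) * Real.exp (-δ * ‖u - D t x‖ ^ 2 / t) * ‖x‖ ^ r
      ≤ ∫ t in Ioc (0:ℝ) 1, K * (t ^ (-q) * Real.exp (-(a * t⁻¹))) :=
        integral_mono_of_nonneg hnonneg hIntIoc key
    _ = K * ∫ t in Ioc (0:ℝ) 1, t ^ (-q) * Real.exp (-(a * t⁻¹)) := integral_const_mul K _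
    _ ≤ K * ∫ t in Ioi (0:ℝ), t ^ (-q) * Real.exp (-(a * t⁻¹)) :=
        mul_le_mul_of_nonneg_left
          (setIntegral_mono_set hIntIoi hnonneg' (HasSubset.Subset.eventuallyLE
            Ioc_subset_Ioi_self)) hK.le
    _ = K * ((1/a) ^ (q-1) * Real.Gamma (q-1)) := by rw [aux_integral_Ioi q a hpr ha]
    _ = K * ((δ*c) ^ (1-q) * Real.Gamma (q-1)) * ‖u - x‖ ^ (-2*p - r + 2) := by
        rw [one_div, Real.inv_rpow ha.le, ← Real.rpow_neg ha.le,
          show -(q-1) = 1-q from by ring, ha_def,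
          Real.mul_rpow hδc.le (by positivity), ← Real.rpow_natCast ‖x - u‖ 2,
          ← Real.rpow_mul (norm_nonneg _), norm_sub_rev u x,
          show ((2:ℕ):ℝ) * (1-q) = -2*p - r + 2 from by rw [hq_def]; push_cast; ring]
        ring
end

section
/- One-dimensional model integral estimate: for p, r ≥ 0 with p + r/2 > 1 and δ, a, b > 0, ∫₀¹ t^{−p} exp(−δ(a²/t + t b²)) b^r dt ≲ a^{−2p−r+2}, with implicit constant depending only on δ, p, r. -/
open MeasureTheory Set Real

lemma rpow_mul_exp_bound (s δ : ℝ) (hs : 0 ≤ s) (hδ : 0 < δ) :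
    ∃ K : ℝ, 0 < K ∧ ∀ x : ℝ, 0 < x → x ^ s * Real.exp (-δ * x) ≤ K := by
  set n := ⌈s⌉₊ with hn
  refine ⟨(1 + n.factorial) * δ ^ (-s), by positivity, fun x hx => ?_⟩
  have hy : 0 < δ * x := by positivity
  have h1 : x ^ s = (δ * x) ^ s * δ ^ (-s) := by
    rw [Real.mul_rpow hδ.le hx.le, mul_right_comm, ← Real.rpow_add hδ, add_neg_cancel,
      Real.rpow_zero, one_mul]
  have h1e : 1 ≤ Real.exp (δ * x) := Real.one_le_exp hy.le
  have hfacpos : (0:ℝ) < n.factorial := Nat.cast_pos.2 (Nat.factorial_pos n)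
  have h2 : (δ * x) ^ s ≤ (1 + (n.factorial : ℝ)) * Real.exp (δ * x) := by
    rcases le_total (δ * x) 1 with h | h
    · have h0 := Real.rpow_le_one hy.le h hs
      nlinarith
    · have hsn : s ≤ (n : ℝ) := Nat.le_ceil s
      have hfac : (δ * x) ^ n / (n.factorial : ℝ) ≤ Real.exp (δ * x) :=
        Real.pow_div_factorial_le_exp (δ * x) hy.le n
      rw [div_le_iff₀ hfacpos] at hfac
      calc (δ * x) ^ s ≤ (δ * x) ^ (n:ℝ) := Real.rpow_le_rpow_of_exponent_le h hsn
        _ = (δ * x) ^ n := Real.rpow_natCast _ n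
        _ ≤ Real.exp (δ * x) * (n.factorial : ℝ) := hfac
        _ ≤ (1 + (n.factorial : ℝ)) * Real.exp (δ * x) := by nlinarith
  have h3 : Real.exp (-δ * x) = (Real.exp (δ * x))⁻¹ := by
    rw [← Real.exp_neg]; ring_nf
  have hep : (0:ℝ) < Real.exp (δ * x) := Real.exp_pos _
  have key : (δ * x) ^ s * Real.exp (-δ * x) ≤ 1 + (n.factorial : ℝ) := by
    rw [h3]
    calc (δ * x) ^ s * (Real.exp (δ * x))⁻¹
        ≤ ((1 + (n.factorial : ℝ)) * Real.exp (δ * x)) * (Real.exp (δ * x))⁻¹ :=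
          mul_le_mul_of_nonneg_right h2 (inv_nonneg.2 hep.le)
      _ = 1 + (n.factorial : ℝ) := by field_simp
  have hδs : (0:ℝ) < δ ^ (-s) := Real.rpow_pos_of_pos hδ _
  calc x ^ s * Real.exp (-δ * x)
      = ((δ * x) ^ s * Real.exp (-δ * x)) * δ ^ (-s) := by rw [h1]; ring
    _ ≤ (1 + n.factorial) * δ ^ (-s) := mul_le_mul_of_nonneg_right key hδs.le
theorem one_dim_gaussian_time_integral
    (p r δ : ℝ) (hp : 0 ≤ p) (hr : 0 ≤ r) (hpr : 1 < p + r / 2) (hδ : 0 < δ) :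
    ∃ C' : ℝ, 0 < C' ∧ ∀ a b : ℝ, 0 < a → 0 < b →
      ∫ t in Ioc (0 : ℝ) 1,
          t ^ (-p) * Real.exp (-δ * (a ^ 2 / t + t * b ^ 2)) * b ^ r ≤
        C' * a ^ (-2 * p - r + 2) := by
  set q := p + r / 2 with hqdef
  have hq : 1 < q := hpr
  have hq0 : 0 < q := lt_trans one_pos hq
  obtain ⟨K1, hK1pos, hK1⟩ := rpow_mul_exp_bound (r / 2) δ (by linarith) hδ
  obtain ⟨K2, hK2pos, hK2⟩ := rpow_mul_exp_bound q δ hq0.le hδ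
  have hq1pos : (0:ℝ) < q - 1 := by linarith
  refine ⟨K1 * K2 + K1 / (q - 1), by positivity, fun a b ha hb => ?_⟩
  set f : ℝ → ℝ := fun t => t ^ (-p) * Real.exp (-δ * (a ^ 2 / t + t * b ^ 2)) * b ^ r
    with hfdef
  set M : ℝ := K1 * K2 * (a ^ 2) ^ (-q) with hMdef
  have ha2 : (0:ℝ) < a ^ 2 := by positivity
  have hMpos : 0 < M := by
    have := Real.rpow_pos_of_pos ha2 (-q); positivity
  -- exponent goal rewriting: a ^ (-2*p - r + 2) = (a^2) ^ (1 - q)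
  have hexp : a ^ (-2 * p - r + 2) = (a ^ 2) ^ (1 - q) := by
    rw [← Real.rpow_natCast a 2, ← Real.rpow_mul ha.le]
    norm_num
    ring_nf
    rw [hqdef]; ring_nf
  -- pointwise bounds
  have hsplitexp : ∀ t : ℝ, Real.exp (-δ * (a ^ 2 / t + t * b ^ 2))
      = Real.exp (-δ * (a ^ 2 / t)) * Real.exp (-δ * (t * b ^ 2)) := by
    intro t; rw [← Real.exp_add]; ring_nf
  have hB : ∀ t : ℝ, 0 < t → Real.exp (-δ * (t * b ^ 2)) * b ^ r ≤ K1 * t ^ (-(r / 2)) := by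
    intro t ht
    have hbr : b ^ r = (t * b ^ 2) ^ (r / 2) * t ^ (-(r / 2)) := by
      have h2 : (b:ℝ) ^ 2 = b ^ (2:ℝ) := by
        rw [← Real.rpow_natCast b 2]; norm_num
      have : (t * b ^ 2) ^ (r / 2) * t ^ (-(r / 2))
          = b ^ ((2:ℝ) * (r / 2)) * (t ^ (r / 2) * t ^ (-(r / 2))) := by
        rw [Real.mul_rpow ht.le (by positivity), h2, ← Real.rpow_mul hb.le]; ring
      rw [this, ← Real.rpow_add ht]
      rw [show r / 2 + -(r / 2) = 0 by ring, Real.rpow_zero, mul_one,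
        show (2:ℝ) * (r / 2) = r by ring]
    rw [hbr, ← mul_assoc]
    have h1 : Real.exp (-δ * (t * b ^ 2)) * (t * b ^ 2) ^ (r / 2) ≤ K1 := by
      rw [mul_comm]; exact hK1 _ (by positivity)
    exact mul_le_mul_of_nonneg_right h1 (Real.rpow_nonneg ht.le _)
  have hA : ∀ t : ℝ, 0 < t →
      Real.exp (-δ * (a ^ 2 / t)) ≤ K2 * (a ^ 2) ^ (-q) * t ^ q := by
    intro t ht
    have hx : 0 < a ^ 2 / t := by positivity
    have h1 := hK2 _ hx
    have h2 : (a ^ 2 / t) ^ (-q) = (a ^ 2) ^ (-q) * t ^ q := by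
      rw [Real.div_rpow ha2.le ht.le, Real.rpow_neg ha2.le, Real.rpow_neg ht.le]
      field_simp
    have hxq : (0:ℝ) < (a ^ 2 / t) ^ q := Real.rpow_pos_of_pos hx _
    have : Real.exp (-δ * (a ^ 2 / t)) ≤ K2 * (a ^ 2 / t) ^ (-q) := by
      rw [Real.rpow_neg hx.le, ← div_eq_mul_inv, le_div_iff₀ hxq]
      calc Real.exp (-δ * (a ^ 2 / t)) * (a ^ 2 / t) ^ q
          = (a ^ 2 / t) ^ q * Real.exp (-δ * (a ^ 2 / t)) := mul_comm _ _
        _ ≤ K2 := h1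
    rw [h2] at this
    linarith [this]
  have hfnn : ∀ t ∈ Ioc (0:ℝ) 1, 0 ≤ f t := by
    intro t ht
    have := ht.1
    positivity
  have boundA : ∀ t ∈ Ioc (0:ℝ) 1, f t ≤ M := by
    intro t ht
    obtain ⟨ht0, ht1⟩ := ht
    have htp : (0:ℝ) ≤ t ^ (-p) := Real.rpow_nonneg ht0.le _
    have heA : (0:ℝ) ≤ Real.exp (-δ * (a ^ 2 / t)) := (Real.exp_pos _).le
    have step1 : f t ≤ t ^ (-p) * Real.exp (-δ * (a ^ 2 / t)) * (K1 * t ^ (-(r / 2))) := by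
      rw [hfdef]
      simp only
      rw [hsplitexp t]
      calc t ^ (-p) * (Real.exp (-δ * (a ^ 2 / t)) * Real.exp (-δ * (t * b ^ 2))) * b ^ r
          = (t ^ (-p) * Real.exp (-δ * (a ^ 2 / t))) * (Real.exp (-δ * (t * b ^ 2)) * b ^ r) := by
            ring
        _ ≤ (t ^ (-p) * Real.exp (-δ * (a ^ 2 / t))) * (K1 * t ^ (-(r / 2))) :=
            mul_le_mul_of_nonneg_left (hB t ht0) (by positivity)
        _ = t ^ (-p) * Real.exp (-δ * (a ^ 2 / t)) * (K1 * t ^ (-(r / 2))) := by ring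
    have hcomb : t ^ (-p) * t ^ (-(r / 2)) = t ^ (-q) := by
      rw [← Real.rpow_add ht0, hqdef]; ring_nf
    have step2 : t ^ (-p) * Real.exp (-δ * (a ^ 2 / t)) * (K1 * t ^ (-(r / 2)))
        = K1 * t ^ (-q) * Real.exp (-δ * (a ^ 2 / t)) := by
      rw [← hcomb]; ring
    have step3 : K1 * t ^ (-q) * Real.exp (-δ * (a ^ 2 / t)) ≤ M := by
      have h := hA t ht0
      have htq : (0:ℝ) ≤ K1 * t ^ (-q) := by positivity
      calc K1 * t ^ (-q) * Real.exp (-δ * (a ^ 2 / t))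
          ≤ K1 * t ^ (-q) * (K2 * (a ^ 2) ^ (-q) * t ^ q) :=
            mul_le_mul_of_nonneg_left h htq
        _ = K1 * K2 * (a ^ 2) ^ (-q) * (t ^ (-q) * t ^ q) := by ring
        _ = M := by rw [← Real.rpow_add ht0]; simp [hMdef]
    linarith [step1, step3, step2 ▸ step1]
  have boundB : ∀ t ∈ Ioc (0:ℝ) 1, f t ≤ K1 * t ^ (-q) := by
    intro t ht
    obtain ⟨ht0, ht1⟩ := ht
    have heA : Real.exp (-δ * (a ^ 2 / t)) ≤ 1 := by
      apply Real.exp_le_one_iff.2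
      have : 0 < a ^ 2 / t := by positivity
      nlinarith
    have hcomb : t ^ (-p) * t ^ (-(r / 2)) = t ^ (-q) := by
      rw [← Real.rpow_add ht0, hqdef]; ring_nf
    have step1 : f t ≤ t ^ (-p) * Real.exp (-δ * (a ^ 2 / t)) * (K1 * t ^ (-(r / 2))) := by
      rw [hfdef]; simp only
      rw [hsplitexp t]
      calc t ^ (-p) * (Real.exp (-δ * (a ^ 2 / t)) * Real.exp (-δ * (t * b ^ 2))) * b ^ r
          = (t ^ (-p) * Real.exp (-δ * (a ^ 2 / t))) * (Real.exp (-δ * (t * b ^ 2)) * b ^ r) := by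
            ring
        _ ≤ (t ^ (-p) * Real.exp (-δ * (a ^ 2 / t))) * (K1 * t ^ (-(r / 2))) :=
            mul_le_mul_of_nonneg_left (hB t ht0) (by positivity)
        _ = t ^ (-p) * Real.exp (-δ * (a ^ 2 / t)) * (K1 * t ^ (-(r / 2))) := by ring
    have step2 : t ^ (-p) * Real.exp (-δ * (a ^ 2 / t)) * (K1 * t ^ (-(r / 2)))
        ≤ K1 * t ^ (-q) := by
      have h1 : t ^ (-p) * Real.exp (-δ * (a ^ 2 / t)) * (K1 * t ^ (-(r / 2)))
          ≤ t ^ (-p) * 1 * (K1 * t ^ (-(r / 2))) := by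
        apply mul_le_mul_of_nonneg_right _ (by positivity)
        exact mul_le_mul_of_nonneg_left heA (Real.rpow_nonneg ht0.le _)
      calc t ^ (-p) * Real.exp (-δ * (a ^ 2 / t)) * (K1 * t ^ (-(r / 2)))
          ≤ t ^ (-p) * 1 * (K1 * t ^ (-(r / 2))) := h1
        _ = K1 * (t ^ (-p) * t ^ (-(r / 2))) := by ring
        _ = K1 * t ^ (-q) := by rw [hcomb]
    linarith
  have hmeas : Measurable f := by
    rw [hfdef]; fun_prop
  have hInt : IntegrableOn f (Ioc (0:ℝ) 1) := by
    apply Measure.integrableOn_of_bounded (M := M) measure_Ioc_lt_top.ne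
      hmeas.aestronglyMeasurable
    filter_upwards [ae_restrict_mem measurableSet_Ioc] with t ht
    rw [Real.norm_eq_abs, abs_of_nonneg (hfnn t ht)]
    exact boundA t ht
  rw [hexp]
  rcases le_or_gt 1 a with ha1 | ha1
  · -- a ≥ 1
    have h1 : ∫ t in Ioc (0:ℝ) 1, f t ≤ ∫ _t in Ioc (0:ℝ) 1, M :=
      setIntegral_mono_on hInt (integrableOn_const measure_Ioc_lt_top.ne)
        measurableSet_Ioc boundA
    have h2 : ∫ _t in Ioc (0:ℝ) 1, M = M := by
      simp [Real.volume_Ioc]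
    have ha2ge : (1:ℝ) ≤ a ^ 2 := by nlinarith
    have h3 : (a ^ 2) ^ (-q) ≤ (a ^ 2) ^ (1 - q) :=
      Real.rpow_le_rpow_of_exponent_le ha2ge (by linarith)
    have h4 : M ≤ K1 * K2 * (a ^ 2) ^ (1 - q) := by
      rw [hMdef]
      exact mul_le_mul_of_nonneg_left h3 (by positivity)
    have hfin : K1 * K2 * (a ^ 2) ^ (1 - q) ≤ (K1 * K2 + K1 / (q - 1)) * (a ^ 2) ^ (1 - q) := by
      apply mul_le_mul_of_nonneg_right _ (Real.rpow_nonneg ha2.le _)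
      have : 0 < K1 / (q - 1) := by
        apply div_pos hK1pos; linarith
      linarith
    calc ∫ t in Ioc (0:ℝ) 1, f t ≤ M := h1.trans_eq h2
      _ ≤ K1 * K2 * (a ^ 2) ^ (1 - q) := h4
      _ ≤ (K1 * K2 + K1 / (q - 1)) * (a ^ 2) ^ (1 - q) := hfin
  · -- a < 1
    set c : ℝ := a ^ 2 with hcdef
    have hc0 : 0 < c := ha2
    have hc1 : c < 1 := by nlinarith
    have hIsub1 : IntegrableOn f (Ioc 0 c) :=
      hInt.mono_set (Ioc_subset_Ioc le_rfl hc1.le)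
    have hIsub2 : IntegrableOn f (Ioc c 1) :=
      hInt.mono_set (Ioc_subset_Ioc hc0.le le_rfl)
    have hsplit : ∫ t in Ioc (0:ℝ) 1, f t
        = (∫ t in Ioc (0:ℝ) c, f t) + ∫ t in Ioc c 1, f t := by
      rw [← setIntegral_union (Ioc_disjoint_Ioc_of_le le_rfl) measurableSet_Ioc hIsub1 hIsub2,
        Ioc_union_Ioc_eq_Ioc hc0.le hc1.le]
    -- piece 1
    have hp1 : ∫ t in Ioc (0:ℝ) c, f t ≤ M * c := by
      have h1 : ∫ t in Ioc (0:ℝ) c, f t ≤ ∫ _t in Ioc (0:ℝ) c, M :=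
        setIntegral_mono_on hIsub1 (integrableOn_const measure_Ioc_lt_top.ne)
          measurableSet_Ioc (fun t ht => boundA t (Ioc_subset_Ioc le_rfl hc1.le ht))
      have h2 : ∫ _t in Ioc (0:ℝ) c, M = c * M := by
        simp [Real.volume_Ioc, ENNReal.toReal_ofReal hc0.le, smul_eq_mul, hc0.le]
      rw [h2] at h1; linarith
    -- piece 2
    have hcont : ContinuousOn (fun t : ℝ => K1 * t ^ (-q)) (Icc c 1) := by
      apply continuousOn_const.mul
      intro t ht
      exact (Real.continuousAt_rpow_const t (-q)
        (Or.inl (ne_of_gt (lt_of_lt_of_le hc0 ht.1)))).continuousWithinAt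
    have hint2 : IntegrableOn (fun t : ℝ => K1 * t ^ (-q)) (Ioc c 1) :=
      (hcont.integrableOn_Icc).mono_set Ioc_subset_Icc_self
    have hp2 : ∫ t in Ioc c 1, f t ≤ K1 * (c ^ (1 - q) / (q - 1)) := by
      have h1 : ∫ t in Ioc c 1, f t ≤ ∫ t in Ioc c 1, K1 * t ^ (-q) :=
        setIntegral_mono_on hIsub2 hint2 measurableSet_Ioc
          (fun t ht => boundB t (Ioc_subset_Ioc hc0.le le_rfl ht))
      have hnotmem : (0:ℝ) ∉ Set.uIcc c 1 := by
        rw [Set.uIcc_of_le hc1.le]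
        rintro ⟨h, -⟩
        linarith
      have hq1 : (-q : ℝ) ≠ -1 := by intro h; rw [neg_inj] at h; linarith
      have hval : ∫ t in Ioc c 1, K1 * t ^ (-q)
          = K1 * ((1 - c ^ (1 - q)) / (1 - q)) := by
        rw [MeasureTheory.integral_const_mul]
        congr 1
        rw [← intervalIntegral.integral_of_le hc1.le,
          integral_rpow (Or.inr ⟨hq1, hnotmem⟩), Real.one_rpow,
          show -q + 1 = 1 - q by ring]
      have hle : K1 * ((1 - c ^ (1 - q)) / (1 - q)) ≤ K1 * (c ^ (1 - q) / (q - 1)) := by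
        apply mul_le_mul_of_nonneg_left _ hK1pos.le
        have heq : (1 - c ^ (1 - q)) / (1 - q) = (c ^ (1 - q) - 1) / (q - 1) := by
          rw [div_eq_div_iff (by intro h; rw [sub_eq_zero] at h; linarith)
            (by intro h; rw [sub_eq_zero] at h; linarith)]
          ring
        rw [heq]
        gcongr
        linarith
      linarith [h1, hval ▸ h1]
    have hMc : M * c = K1 * K2 * c ^ (1 - q) := by
      have : c ^ (-q) * c = c ^ (1 - q) := by
        nth_rewrite 2 [← Real.rpow_one c]
        rw [← Real.rpow_add hc0]
        ring_nf
      rw [hMdef]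
      calc K1 * K2 * c ^ (-q) * c = K1 * K2 * (c ^ (-q) * c) := by ring
        _ = K1 * K2 * c ^ (1 - q) := by rw [this]
    have hfinal : M * c + K1 * (c ^ (1 - q) / (q - 1))
        = (K1 * K2 + K1 / (q - 1)) * c ^ (1 - q) := by
      rw [hMc]
      field_simp
    calc ∫ t in Ioc (0:ℝ) 1, f t
        = (∫ t in Ioc (0:ℝ) c, f t) + ∫ t in Ioc c 1, f t := hsplit
      _ ≤ M * c + K1 * (c ^ (1 - q) / (q - 1)) := add_le_add hp1 hp2
      _ = (K1 * K2 + K1 / (q - 1)) * c ^ (1 - q) := hfinal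
end
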